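/- arXiv:2002.06824 — 4 statements merged into one kernel-verified Lean document; each statement's English description precedes it below -/
import Mathlib

section
/- With Q̄^{(n)}(y₁,y₂) = (1/(2πi))∮_{|w|=r} (1+w)^{y₁-y₂-1} · 2^{-(y₁-y₂)} · w^{-n} dw (0 < r < 1), the following hold for all x, y ∈ ℤ: for n ≥ 2, Σ_{z∈ℤ} Q^{-1}(x,z) Q̄^{(n)}(z,y) = Q̄^{(n-1)}(x,y) and Σ_{z∈ℤ} Q̄^{(n)}(x,z) Q^{-1}(z,y) = Q̄^{(n-1)}(x,y); and for n = 1, Σ_{z∈ℤ} Q^{-1}(x,z) Q̄^{(1)}(z,y) = 0 and Σ_{z∈ℤ} Q̄^{(1)}(x,z) Q^{-1}(z,y) = 0. (All sums have at most two nonzero terms since Q^{-1}(x,y) = 2·1_{x=y-1} − 1_{x=y}.) -/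
open Complex Metric

/-- `(1/(2πi)) ∮_{|w|=r} F(w) dw`, the normalized contour integral over the
positively oriented circle of radius `r` centered at `0` in `ℂ`. -/
noncomputable def cInt (r : ℝ) (F : ℂ → ℂ) : ℂ :=
  (2 * (Real.pi : ℂ) * Complex.I)⁻¹ * ∮ w in C(0, r), F w

/-- `Q̄^{(n)}(y₁,y₂) = (1/(2πi))∮_{|w|=r} (1+w)^{y₁-y₂-1} · 2^{-(y₁-y₂)} · w^{-n} dw`. -/
noncomputable def Qbar (r : ℝ) (n : ℕ) (y₁ y₂ : ℤ) : ℂ :=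
  cInt r (fun w => (1 + w) ^ (y₁ - y₂ - 1) * (2 : ℂ) ^ (y₂ - y₁) * w ^ (-(n : ℤ)))

/-- The kernel `Q^{-1}(x,y) = 2·1_{x=y-1} − 1_{x=y}`. -/
noncomputable def Qinv (x y : ℤ) : ℝ :=
  2 * (if x = y - 1 then 1 else 0) - (if x = y then 1 else 0)

lemma sphere_ne (r : ℝ) (hr0 : 0 < r) (hr1 : r < 1) {w : ℂ} (hw : w ∈ sphere (0:ℂ) r) :
    w ≠ 0 ∧ (1 : ℂ) + w ≠ 0 := by
  have hwn : ‖w‖ = r := by simpa [mem_sphere_iff_norm] using hw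
  constructor
  · intro h; rw [h] at hwn; simp at hwn; linarith
  · intro h
    have : w = -1 := by linear_combination h
    rw [this] at hwn; simp at hwn; linarith

lemma integrable_aux (r : ℝ) (hr0 : 0 < r) (hr1 : r < 1) (m k : ℤ) (c : ℂ) :
    CircleIntegrable (fun w => (1 + w) ^ m * c * w ^ k) 0 r := by
  apply ContinuousOn.circleIntegrable hr0.le
  intro w hw
  obtain ⟨hw0, h1w⟩ := sphere_ne r hr0 hr1 hw
  have h1 : ContinuousAt (fun w : ℂ => (1 + w) ^ m) w :=
    (continuousAt_zpow₀ _ m (Or.inl h1w)).comp ((continuous_const.add continuous_id).continuousAt)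
  have h2 : ContinuousAt (fun w : ℂ => w ^ k) w := continuousAt_zpow₀ _ k (Or.inl hw0)
  exact ((h1.mul continuousAt_const).mul h2).continuousWithinAt

lemma key (r : ℝ) (hr0 : 0 < r) (hr1 : r < 1) (n : ℕ) (x y : ℤ) :
    2 * cInt r (fun w => (1 + w) ^ (x - y) * (2 : ℂ) ^ (y - x - 1) * w ^ (-(n : ℤ)))
      - cInt r (fun w => (1 + w) ^ (x - y - 1) * (2 : ℂ) ^ (y - x) * w ^ (-(n : ℤ)))
    = cInt r (fun w => (1 + w) ^ (x - y - 1) * (2 : ℂ) ^ (y - x) * w ^ (1 - (n : ℤ))) := by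
  have hkey :
      2 * (∮ w in C((0:ℂ), r), (1 + w) ^ (x - y) * (2 : ℂ) ^ (y - x - 1) * w ^ (-(n : ℤ)))
        - (∮ w in C((0:ℂ), r), (1 + w) ^ (x - y - 1) * (2 : ℂ) ^ (y - x) * w ^ (-(n : ℤ)))
      = ∮ w in C((0:ℂ), r), (1 + w) ^ (x - y - 1) * (2 : ℂ) ^ (y - x) * w ^ (1 - (n : ℤ)) := by
    have h1 : CircleIntegrable
        (fun w : ℂ => 2 * ((1 + w) ^ (x - y) * (2 : ℂ) ^ (y - x - 1) * w ^ (-(n : ℤ)))) 0 r := by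
      simpa [mul_comm, mul_assoc, mul_left_comm] using
        integrable_aux r hr0 hr1 (x - y) (-(n : ℤ)) (2 * (2 : ℂ) ^ (y - x - 1))
    have h2 := integrable_aux r hr0 hr1 (x - y - 1) (-(n : ℤ)) ((2 : ℂ) ^ (y - x))
    have hsub := circleIntegral.integral_sub h1 h2
    have hcm := circleIntegral.integral_const_mul (2 : ℂ)
      (fun w : ℂ => (1 + w) ^ (x - y) * (2 : ℂ) ^ (y - x - 1) * w ^ (-(n : ℤ))) 0 r
    rw [← hcm, ← hsub]
    have heq : Set.EqOn
        (fun w : ℂ => 2 * ((1 + w) ^ (x - y) * (2 : ℂ) ^ (y - x - 1) * w ^ (-(n : ℤ)))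
          - (1 + w) ^ (x - y - 1) * (2 : ℂ) ^ (y - x) * w ^ (-(n : ℤ)))
        (fun w : ℂ => (1 + w) ^ (x - y - 1) * (2 : ℂ) ^ (y - x) * w ^ (1 - (n : ℤ)))
        (sphere (0 : ℂ) r) := by
      intro w hw
      obtain ⟨hw0, h1w⟩ := sphere_ne r hr0 hr1 hw
      simp only
      rw [show x - y = (x - y - 1) + 1 by ring, zpow_add_one₀ h1w,
          show y - x - 1 = (y - x) + (-1) by ring, zpow_add₀ (two_ne_zero) (y-x) (-1),
          show (1 : ℤ) - n = (-(n:ℤ)) + 1 by ring, zpow_add_one₀ hw0]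
      simp only [zpow_neg, zpow_one]
      ring
    exact circleIntegral.integral_congr hr0.le heq
  unfold cInt
  rw [← hkey]
  ring

lemma qbar_shift_left (r : ℝ) (n : ℕ) (x y : ℤ) :
    Qbar r n (x + 1) y
      = cInt r (fun w => (1 + w) ^ (x - y) * (2 : ℂ) ^ (y - x - 1) * w ^ (-(n : ℤ))) := by
  unfold Qbar
  rw [show x + 1 - y - 1 = x - y by ring, show y - (x + 1) = y - x - 1 by ring]

lemma qbar_shift_right (r : ℝ) (n : ℕ) (x y : ℤ) :
    Qbar r n x (y - 1)
      = cInt r (fun w => (1 + w) ^ (x - y) * (2 : ℂ) ^ (y - x - 1) * w ^ (-(n : ℤ))) := by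
  unfold Qbar
  rw [show x - (y - 1) - 1 = x - y by ring, show y - 1 - x = y - x - 1 by ring]

lemma tsum_left (f : ℤ → ℂ) (x : ℤ) :
    (∑' z : ℤ, (Qinv x z : ℂ) * f z) = 2 * f (x + 1) - f x := by
  have h : ∀ z : ℤ, z ∉ ({x, x + 1} : Finset ℤ) → (Qinv x z : ℂ) * f z = 0 := by
    intro z hz
    simp only [Finset.mem_insert, Finset.mem_singleton] at hz
    push_neg at hz
    have : Qinv x z = 0 := by
      unfold Qinv
      rw [if_neg (by omega), if_neg (by omega)]
      ring
    simp [this]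
  rw [tsum_eq_sum h, Finset.sum_pair (by omega)]
  have h1 : Qinv x x = -1 := by unfold Qinv; rw [if_neg (by omega), if_pos rfl]; ring
  have h2 : Qinv x (x + 1) = 2 := by unfold Qinv; rw [if_pos (by omega), if_neg (by omega)]; ring
  rw [h1, h2]
  push_cast
  ring

lemma tsum_right (f : ℤ → ℂ) (y : ℤ) :
    (∑' z : ℤ, f z * (Qinv z y : ℂ)) = 2 * f (y - 1) - f y := by
  have h : ∀ z : ℤ, z ∉ ({y - 1, y} : Finset ℤ) → f z * (Qinv z y : ℂ) = 0 := by
    intro z hz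
    simp only [Finset.mem_insert, Finset.mem_singleton] at hz
    push_neg at hz
    have : Qinv z y = 0 := by
      unfold Qinv
      rw [if_neg (by omega), if_neg (by omega)]
      ring
    simp [this]
  rw [tsum_eq_sum h, Finset.sum_pair (by omega)]
  have h1 : Qinv y y = -1 := by unfold Qinv; rw [if_neg (by omega), if_pos rfl]; ring
  have h2 : Qinv (y - 1) y = 2 := by unfold Qinv; rw [if_pos rfl, if_neg (by omega)]; ring
  rw [h1, h2]
  push_cast
  ring

lemma cInt_one_zero (r : ℝ) (hr0 : 0 < r) (hr1 : r < 1) (x y : ℤ) :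
    cInt r (fun w => (1 + w) ^ (x - y - 1) * (2 : ℂ) ^ (y - x) * w ^ ((0 : ℤ))) = 0 := by
  unfold cInt
  rw [mul_eq_zero]
  right
  apply circleIntegral_eq_zero_of_differentiable_on_off_countable hr0.le Set.countable_empty
    (f := fun w => (1 + w) ^ (x - y - 1) * (2 : ℂ) ^ (y - x) * w ^ ((0 : ℤ)))
  · intro w hw
    have h1w : (1 : ℂ) + w ≠ 0 := by
      intro h
      have hwe : w = -1 := by linear_combination h
      have : ‖w‖ ≤ r := by simpa [mem_closedBall_iff_norm] using hw
      rw [hwe] at this; simp at this; linarith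
    have h1 : ContinuousAt (fun w : ℂ => (1 + w) ^ (x - y - 1)) w :=
      (continuousAt_zpow₀ _ _ (Or.inl h1w)).comp
        ((continuous_const.add continuous_id).continuousAt)
    exact (((h1.mul continuousAt_const).mul (continuousAt_zpow₀ _ _ (Or.inr le_rfl)))).continuousWithinAt
  · intro w hw
    have h1w : (1 : ℂ) + w ≠ 0 := by
      intro h
      have hwe : w = -1 := by linear_combination h
      have : ‖w‖ < r := by simpa [mem_ball_iff_norm] using hw.1
      rw [hwe] at this; simp at this; linarith
    have h1 : DifferentiableAt ℂ (fun w : ℂ => (1 + w) ^ (x - y - 1)) w := by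
      have := differentiableAt_zpow (𝕜 := ℂ) (m := x - y - 1) (x := 1 + w) |>.mpr (Or.inl h1w)
      exact this.comp w ((differentiableAt_const 1).add differentiableAt_id)
    exact (h1.mul (differentiableAt_const _)).mul
      ((differentiableAt_zpow.mpr (Or.inr le_rfl)))

/-- For `n ≥ 2`, `Q^{-1} Q̄^{(n)} = Q̄^{(n)} Q^{-1} = Q̄^{(n-1)}`, and for `n = 1`,
`Q^{-1} Q̄^{(1)} = Q̄^{(1)} Q^{-1} = 0` (convolutions over `ℤ`). -/
theorem statement5 (r : ℝ) (hr0 : 0 < r) (hr1 : r < 1) :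
    (∀ n : ℕ, 2 ≤ n → ∀ x y : ℤ,
      (∑' z : ℤ, (Qinv x z : ℂ) * Qbar r n z y) = Qbar r (n - 1) x y ∧
      (∑' z : ℤ, Qbar r n x z * (Qinv z y : ℂ)) = Qbar r (n - 1) x y) ∧
    (∀ x y : ℤ,
      (∑' z : ℤ, (Qinv x z : ℂ) * Qbar r 1 z y) = 0 ∧
      (∑' z : ℤ, Qbar r 1 x z * (Qinv z y : ℂ)) = 0) := by
  have hL : ∀ (n : ℕ) (x y : ℤ), (∑' z : ℤ, (Qinv x z : ℂ) * Qbar r n z y)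
      = cInt r (fun w => (1 + w) ^ (x - y - 1) * (2 : ℂ) ^ (y - x) * w ^ (1 - (n : ℤ))) := by
    intro n x y
    rw [tsum_left (fun z => Qbar r n z y) x, qbar_shift_left, ← key r hr0 hr1 n x y]
    rfl
  have hR : ∀ (n : ℕ) (x y : ℤ), (∑' z : ℤ, Qbar r n x z * (Qinv z y : ℂ))
      = cInt r (fun w => (1 + w) ^ (x - y - 1) * (2 : ℂ) ^ (y - x) * w ^ (1 - (n : ℤ))) := by
    intro n x y
    rw [tsum_right (fun z => Qbar r n x z) y, qbar_shift_right, ← key r hr0 hr1 n x y]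
    rfl
  constructor
  · intro n hn x y
    have hexp : (1 : ℤ) - (n : ℤ) = -((n - 1 : ℕ) : ℤ) := by
      have : (1 : ℕ) ≤ n := by omega
      push_cast [Nat.cast_sub this]
      ring
    constructor
    · rw [hL n x y, hexp]; rfl
    · rw [hR n x y, hexp]; rfl
  · intro x y
    have hexp : (1 : ℤ) - ((1 : ℕ) : ℤ) = 0 := by norm_num
    constructor
    · rw [hL 1 x y, hexp]; exact cInt_one_zero r hr0 hr1 x y
    · rw [hR 1 x y, hexp]; exact cInt_one_zero r hr0 hr1 x y
end

section
/- Fix a radius r with 0 < r and r·α_j < 1 for all 1 ≤ j ≤ t₁, and for an integer j ≥ 0 and y₀ ∈ ℤ define Ψ_j[y₀](x) = (1/(2πi))∮_{|w|=r} (1−w)^{j} · 2^{y₀-x} · w^{-(x+j+1-y₀)} · f_{α,β,γ}(w,t) dw. Then Ψ_j[y₀](z) = 0 whenever z ≤ y₀ − j − 1, and for all integers m, n, k with 1 ≤ m < n and 0 ≤ k ≤ m, and all x, y₀ ∈ ℤ: Σ_{z∈ℤ} Q^{n-m}(x,z) · Ψ_{n-k}[y₀](z) = Ψ_{m-k}[y₀](x),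 the sum having only finitely many nonzero terms. -/
/-- The function `f_{α,β,γ}(w,t) = ∏_{j=1}^{t₁} (1−α_j)/(1−α_j w) ·
∏_{j=t₁+1}^{t₁+t₂} (1+β_j w)/(1+β_j) · exp(γ t₃ (w−1))`. -/
noncomputable def fabc (t₁ t₂ : ℕ) (t₃ γ : ℝ) (α β : ℕ → ℝ) (w : ℂ) : ℂ :=
  (∏ j ∈ Finset.Icc 1 t₁, (1 - (α j : ℂ)) / (1 - (α j : ℂ) * w)) *
  (∏ j ∈ Finset.Icc (t₁ + 1) (t₁ + t₂), (1 + (β j : ℂ) * w) / (1 + (β j : ℂ))) *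
  Complex.exp ((γ : ℂ) * (t₃ : ℂ) * (w - 1))

/-- `Ψ_j[y₀](x) = (1/(2πi))∮_{|w|=r} (1−w)^j 2^{y₀-x} w^{-(x+j+1-y₀)} f_{α,β,γ}(w,t) dw`. -/
noncomputable def Psi (t₁ t₂ : ℕ) (t₃ γ : ℝ) (α β : ℕ → ℝ) (r : ℝ)
    (j : ℕ) (y₀ x : ℤ) : ℂ :=
  cInt r (fun w =>
    (1 - w) ^ (j : ℤ) * (2 : ℂ) ^ (y₀ - x) * w ^ (-(x + (j : ℤ) + 1 - y₀)) *
    fabc t₁ t₂ t₃ γ α β w)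

/-- The `m`-fold convolution power of `Q`:
`Q^m(x,z) = 2^{-(x-z)} binom(x-z-1, m-1) 1_{x ≥ z+m}`. -/
noncomputable def Qp (m : ℕ) (x z : ℤ) : ℝ :=
  if z + m ≤ x then (2 : ℝ) ^ (z - x) * ((x - z - 1).toNat.choose (m - 1) : ℝ) else 0

/-!
Both sides of the semigroup relation solve the same first-order recursion in `x`. For the
kernel it is Pascal's rule `2 Q^{p+1}(x+1, z) = Q^{p+1}(x, z) + Q^p(x, z)`; for `Ψ` it is
`2 Ψ_j(x+1) = Ψ_j(x) + Ψ_{j+1}(x)`, which already holds for the integrands on the circle. Both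
sides also vanish for small `x`: once the power of `w` in the integrand of `Ψ_j(x)` is
nonnegative, the integrand is holomorphic on the closed disc (the poles `1/α_j` of `f` lie outside
it), so Cauchy's theorem applies. A recursion with zero initial data has only one solution, and
induction on the number of steps of `Q` finishes the proof.
-/

open Complex Metric Finset

theorem Qp_eq_zero_of_lt {m : ℕ} {x z : ℤ} (h : x < z + m) : Qp m x z = 0 :=
  if_neg (not_le.2 h)

/-- `Qp 0` is not the identity kernel (`0 - 1 = 0` in `ℕ`), so in the first step of Pascal's rule
the Kronecker delta takes the place of `Q^0`. -/
theorem two_mul_Qp_one_succ (x z : ℤ) :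
    2 * Qp 1 (x + 1) z = Qp 1 x z + if z = x then 1 else 0 := by
  unfold Qp
  rcases lt_trichotomy z x with h | rfl | h
  · rw [if_pos (by omega), if_pos (by omega), if_neg h.ne, zpow_sub₀ two_ne_zero,
      zpow_sub₀ two_ne_zero, zpow_add_one₀ two_ne_zero]
    field_simp
    simp
  · simp
  · rw [if_neg (by omega), if_neg (by omega), if_neg h.ne']
    simp

theorem two_mul_Qp_succ_succ {p : ℕ} (hp : 1 ≤ p) (x z : ℤ) :
    2 * Qp (p + 1) (x + 1) z = Qp (p + 1) x z + Qp p x z := by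
  rcases le_or_gt (z + p) x with h | h
  · obtain ⟨n, hn⟩ : ∃ n : ℕ, x - z - 1 = n := ⟨(x - z - 1).toNat, by omega⟩
    obtain ⟨q, rfl⟩ : ∃ q, p = q + 1 := ⟨p - 1, by omega⟩
    have hQp_succ : Qp (q + 1 + 1) x z = 2 ^ (z - x) * (n.choose (q + 1) : ℝ) := by
      unfold Qp
      split_ifs
      · rw [hn]; simp
      · rw [Nat.choose_eq_zero_of_lt (by omega)]; simp
    rw [hQp_succ]
    unfold Qp
    rw [if_pos (by push_cast; omega), if_pos (by push_cast; omega),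
      show x + 1 - z - 1 = ((n + 1 : ℕ) : ℤ) by push_cast; omega, hn, Int.toNat_natCast,
      Int.toNat_natCast, show q + 1 + 1 - 1 = q + 1 by omega, show q + 1 - 1 = q by omega,
      Nat.choose_succ_succ', show z - x = z - (x + 1) + 1 by ring, zpow_add_one₀ two_ne_zero]
    push_cast
    ring
  · rw [Qp_eq_zero_of_lt (by push_cast; omega), Qp_eq_zero_of_lt (by push_cast; omega),
      Qp_eq_zero_of_lt h]
    simp

noncomputable def applyQp (p : ℕ) (g : ℤ → ℂ) (x : ℤ) : ℂ :=
  ∑' z : ℤ, (Qp p x z : ℂ) * g z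

section ApplyQp

variable {g : ℤ → ℂ} {a : ℤ}

theorem applyQp_eq_sum (hg : ∀ z < a, g z = 0) {p : ℕ} {x b : ℤ} (hb : x - p ≤ b) :
    applyQp p g x = ∑ z ∈ Icc a b, (Qp p x z : ℂ) * g z := by
  refine tsum_eq_sum fun z hz => ?_
  rw [mem_Icc, not_and_or, not_le, not_le] at hz
  rcases hz with hz | hz
  · rw [hg z hz, mul_zero]
  · rw [Qp_eq_zero_of_lt (by omega), ofReal_zero, zero_mul]

theorem applyQp_eq_zero (hg : ∀ z < a, g z = 0) {p : ℕ} {x : ℤ} (hx : x < a + p) :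
    applyQp p g x = 0 := by
  rw [applyQp_eq_sum hg (b := a - 1) (by omega), Icc_eq_empty (by omega), sum_empty]

theorem two_mul_applyQp_one_succ (hg : ∀ z < a, g z = 0) (x : ℤ) :
    2 * applyQp 1 g (x + 1) = applyQp 1 g x + g x := by
  rw [applyQp_eq_sum hg (b := x) (by omega), applyQp_eq_sum hg (b := x) (by omega), mul_sum]
  have hterm (z : ℤ) :
      2 * ((Qp 1 (x + 1) z : ℂ) * g z) = (Qp 1 x z : ℂ) * g z + if z = x then g z else 0 := by
    have h := congrArg (fun t : ℝ => (t : ℂ) * g z) (two_mul_Qp_one_succ x z)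
    split_ifs at h ⊢ <;> push_cast at h <;> linear_combination h
  rw [sum_congr rfl fun z _ => hterm z, sum_add_distrib, sum_ite_eq' (Icc a x)]
  split_ifs with hx
  · rfl
  · rw [hg x (by simpa using hx)]

theorem two_mul_applyQp_succ_succ (hg : ∀ z < a, g z = 0) {p : ℕ} (hp : 1 ≤ p) (x : ℤ) :
    2 * applyQp (p + 1) g (x + 1) = applyQp (p + 1) g x + applyQp p g x := by
  rw [applyQp_eq_sum hg (b := x) (by omega), applyQp_eq_sum hg (b := x) (by omega),
    applyQp_eq_sum hg (b := x) (by omega), mul_sum, ← sum_add_distrib]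
  refine sum_congr rfl fun z _ => ?_
  have h := congrArg (fun t : ℝ => (t : ℂ) * g z) (two_mul_Qp_succ_succ hp x z)
  push_cast at h
  linear_combination h

end ApplyQp

theorem eq_of_mul_succ_eq {R : Type*} [Semiring R] {c : R} (hc : IsLeftRegular c)
    {F G h : ℤ → R} {a : ℤ} (hF : ∀ x < a, F x = 0) (hG : ∀ x < a, G x = 0)
    (hFs : ∀ x, c * F (x + 1) = F x + h x) (hGs : ∀ x, c * G (x + 1) = G x + h x) :
    F = G := by
  have h_ge (x : ℤ) (hx : a - 1 ≤ x) : F x = G x := by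
    induction x, hx using Int.leInduction with
    | base => rw [hF _ (by omega), hG _ (by omega)]
    | succ x _ ih => exact hc (show c * F (x + 1) = c * G (x + 1) by rw [hFs, hGs, ih])
  funext x
  rcases lt_or_ge x a with hx | hx
  · rw [hF x hx, hG x hx]
  · exact h_ge x (by omega)

section Contour

variable {t₁ t₂ : ℕ} {t₃ γ : ℝ} {α β : ℕ → ℝ} {r : ℝ}

theorem differentiableOn_fabc (hα : ∀ j ∈ Icc 1 t₁, r * |α j| < 1) :
    DifferentiableOn ℂ (fabc t₁ t₂ t₃ γ α β) (closedBall 0 r) := by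
  refine DifferentiableOn.mul (DifferentiableOn.mul ?_ ?_) (by fun_prop)
  · refine DifferentiableOn.fun_finsetProd fun j hj =>
      (differentiableOn_const _).div (by fun_prop) fun w hw hzero => ?_
    have hw : ‖w‖ ≤ r := by simpa using hw
    have hlt : ‖(α j : ℂ) * w‖ < 1 := by
      rw [norm_mul, norm_real, Real.norm_eq_abs]
      nlinarith [abs_nonneg (α j), hα j hj]
    rw [← sub_eq_zero.mp hzero, norm_one] at hlt
    exact hlt.false
  · exact DifferentiableOn.fun_finsetProd fun j _ => by fun_prop

theorem cInt_eq_zero_of_differentiableOn {F : ℂ → ℂ} (hr : 0 ≤ r)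
    (hF : DifferentiableOn ℂ F (closedBall 0 r)) : cInt r F = 0 := by
  rw [cInt, circleIntegral_eq_zero_of_differentiable_on_off_countable hr Set.countable_empty
    hF.continuousOn fun w hw => hF.differentiableAt (closedBall_mem_nhds_of_mem hw.1), mul_zero]

theorem cInt_const_mul (c : ℂ) (F : ℂ → ℂ) : cInt r (fun w => c * F w) = c * cInt r F := by
  rw [cInt, cInt, circleIntegral.integral_const_mul]
  ring

theorem cInt_add {F G : ℂ → ℂ} (hF : CircleIntegrable F 0 r) (hG : CircleIntegrable G 0 r) :
    cInt r (fun w => F w + G w) = cInt r F + cInt r G := by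
  rw [cInt, cInt, cInt, circleIntegral.integral_add hF hG, mul_add]

theorem cInt_congr {F G : ℂ → ℂ} (hr : 0 ≤ r) (h : Set.EqOn F G (sphere 0 r)) :
    cInt r F = cInt r G := by
  rw [cInt, cInt, circleIntegral.integral_congr hr h]

variable (t₁ t₂ t₃ γ α β) in
noncomputable def psiIntegrand (j : ℕ) (y₀ x : ℤ) (w : ℂ) : ℂ :=
  (1 - w) ^ (j : ℤ) * (2 : ℂ) ^ (y₀ - x) * w ^ (-(x + (j : ℤ) + 1 - y₀)) *
    fabc t₁ t₂ t₃ γ α β w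

theorem Psi_eq_cInt (j : ℕ) (y₀ x : ℤ) :
    Psi t₁ t₂ t₃ γ α β r j y₀ x = cInt r (psiIntegrand t₁ t₂ t₃ γ α β j y₀ x) :=
  rfl

theorem Psi_eq_zero_of_le (hr : 0 ≤ r) (hα : ∀ j ∈ Icc 1 t₁, r * |α j| < 1) {j : ℕ}
    {y₀ z : ℤ} (hz : z ≤ y₀ - j - 1) : Psi t₁ t₂ t₃ γ α β r j y₀ z = 0 := by
  obtain ⟨n, hn⟩ : ∃ n : ℕ, -(z + (j : ℤ) + 1 - y₀) = n :=
    ⟨_, (Int.toNat_of_nonneg (by omega)).symm⟩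
  have hf : DifferentiableOn ℂ (fabc t₁ t₂ t₃ γ α β) (closedBall 0 r) :=
    differentiableOn_fabc hα
  refine cInt_eq_zero_of_differentiableOn hr ?_
  simp only [hn, zpow_natCast]
  fun_prop

theorem continuousOn_psiIntegrand (hr : 0 < r) (hα : ∀ j ∈ Icc 1 t₁, r * |α j| < 1)
    (j : ℕ) (y₀ x : ℤ) :
    ContinuousOn (psiIntegrand t₁ t₂ t₃ γ α β j y₀ x) (sphere 0 r) := by
  have hf : ContinuousOn (fabc t₁ t₂ t₃ γ α β) (sphere 0 r) :=
    (differentiableOn_fabc hα).continuousOn.mono sphere_subset_closedBall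
  have hzpow (w : ℂ) (hw : w ∈ sphere (0 : ℂ) r) : w ≠ 0 ∨ 0 ≤ -(x + (j : ℤ) + 1 - y₀) :=
    Or.inl (ne_zero_of_mem_sphere hr.ne' ⟨w, hw⟩)
  unfold psiIntegrand
  simp only [zpow_natCast]
  fun_prop (disch := assumption)

theorem two_mul_psiIntegrand_succ {w : ℂ} (hw : w ≠ 0) (j : ℕ) (y₀ x : ℤ) :
    2 * psiIntegrand t₁ t₂ t₃ γ α β j y₀ (x + 1) w =
      psiIntegrand t₁ t₂ t₃ γ α β j y₀ x w + psiIntegrand t₁ t₂ t₃ γ α β (j + 1) y₀ x w := by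
  have hpow : w ^ (-(x + (j : ℤ) + 1 - y₀)) = w ^ (-(x + 1 + (j : ℤ) + 1 - y₀)) * w := by
    rw [← zpow_add_one₀ hw]; congr 1; ring
  have hpow_succ :
      w ^ (-(x + ((j + 1 : ℕ) : ℤ) + 1 - y₀)) = w ^ (-(x + 1 + (j : ℤ) + 1 - y₀)) := by
    congr 1; push_cast; ring
  have htwo : (2 : ℂ) ^ (y₀ - x) = 2 * 2 ^ (y₀ - (x + 1)) := by
    rw [← zpow_one_add₀ two_ne_zero]; congr 1; ring
  simp only [psiIntegrand, hpow, hpow_succ, htwo, zpow_natCast]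
  ring

theorem two_mul_Psi_succ (hr : 0 < r) (hα : ∀ j ∈ Icc 1 t₁, r * |α j| < 1) (j : ℕ)
    (y₀ x : ℤ) :
    2 * Psi t₁ t₂ t₃ γ α β r j y₀ (x + 1) =
      Psi t₁ t₂ t₃ γ α β r j y₀ x + Psi t₁ t₂ t₃ γ α β r (j + 1) y₀ x := by
  rw [Psi_eq_cInt, Psi_eq_cInt, Psi_eq_cInt, ← cInt_const_mul,
    ← cInt_add ((continuousOn_psiIntegrand hr hα j y₀ x).circleIntegrable hr.le)
      ((continuousOn_psiIntegrand hr hα (j + 1) y₀ x).circleIntegrable hr.le)]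
  exact cInt_congr hr.le fun w hw =>
    two_mul_psiIntegrand_succ (ne_zero_of_mem_sphere hr.ne' ⟨w, hw⟩) j y₀ x

theorem applyQp_Psi (hr : 0 < r) (hα : ∀ j ∈ Icc 1 t₁, r * |α j| < 1) {p : ℕ} (hp : 1 ≤ p)
    (j : ℕ) (y₀ : ℤ) :
    applyQp p (Psi t₁ t₂ t₃ γ α β r (j + p) y₀) = Psi t₁ t₂ t₃ γ α β r j y₀ := by
  have hvanish (i : ℕ) : ∀ z < y₀ - i, Psi t₁ t₂ t₃ γ α β r i y₀ z = 0 :=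
    fun z hz => Psi_eq_zero_of_le hr.le hα (by omega)
  have htwo : IsLeftRegular (2 : ℂ) := (IsRegular.of_ne_zero two_ne_zero).left
  induction p, hp using Nat.le_induction generalizing j with
  | base =>
    exact eq_of_mul_succ_eq htwo
      (fun x hx => applyQp_eq_zero (hvanish (j + 1)) (by push_cast; omega)) (hvanish j)
      (two_mul_applyQp_one_succ (hvanish (j + 1))) (two_mul_Psi_succ hr hα j y₀)
  | succ p hp ih =>
    refine eq_of_mul_succ_eq htwo
      (fun x hx => applyQp_eq_zero (hvanish (j + (p + 1))) (by push_cast; omega)) (hvanish j)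
      (fun x => ?_) (two_mul_Psi_succ hr hα j y₀)
    rw [two_mul_applyQp_succ_succ (hvanish _) hp, ← ih (j + 1),
      show j + 1 + p = j + (p + 1) by omega]

end Contour

theorem statement11_general (t₁ t₂ : ℕ) (t₃ γ : ℝ)
    (α β : ℕ → ℝ)
    (hα : ∀ j ∈ Finset.Icc 1 t₁, 0 ≤ α j ∧ α j < 1)
    (r : ℝ) (hr : 0 < r) (hrα : ∀ j ∈ Finset.Icc 1 t₁, r * α j < 1) :
    (∀ (j : ℕ) (y₀ z : ℤ), z ≤ y₀ - j - 1 → Psi t₁ t₂ t₃ γ α β r j y₀ z = 0) ∧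
    (∀ m n k : ℕ, 1 ≤ m → m < n → k ≤ m → ∀ x y₀ : ℤ,
      (∑' z : ℤ, (Qp (n - m) x z : ℂ) * Psi t₁ t₂ t₃ γ α β r (n - k) y₀ z)
        = Psi t₁ t₂ t₃ γ α β r (m - k) y₀ x) := by
  have hrα' : ∀ j ∈ Icc 1 t₁, r * |α j| < 1 := fun j hj => by
    rw [abs_of_nonneg (hα j hj).1]; exact hrα j hj
  refine ⟨fun j y₀ z hz => Psi_eq_zero_of_le hr.le hrα' hz, fun m n k hm hmn hk x y₀ => ?_⟩
  rw [show n - k = m - k + (n - m) by omega]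
  exact congrFun (applyQp_Psi hr hrα' (by omega) (m - k) y₀) x

/-- `Ψ_j[y₀](z) = 0` for `z ≤ y₀ − j − 1`, and the semigroup relation
`Q^{n-m} Ψ^n_{n-k} = Ψ^m_{m-k}` holds, i.e.
`Σ_z Q^{n-m}(x,z) Ψ_{n-k}[y₀](z) = Ψ_{m-k}[y₀](x)` for `1 ≤ m < n`, `0 ≤ k ≤ m`. -/
theorem statement11 (t₁ t₂ : ℕ) (t₃ γ : ℝ) (ht₃ : 0 ≤ t₃) (hγ : 0 ≤ γ)
    (α β : ℕ → ℝ)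
    (hα : ∀ j ∈ Finset.Icc 1 t₁, 0 ≤ α j ∧ α j < 1)
    (hβ : ∀ j ∈ Finset.Icc (t₁ + 1) (t₁ + t₂), 0 ≤ β j)
    (r : ℝ) (hr : 0 < r) (hrα : ∀ j ∈ Finset.Icc 1 t₁, r * α j < 1) :
    (∀ (j : ℕ) (y₀ z : ℤ), z ≤ y₀ - j - 1 → Psi t₁ t₂ t₃ γ α β r j y₀ z = 0) ∧
    (∀ m n k : ℕ, 1 ≤ m → m < n → k ≤ m → ∀ x y₀ : ℤ,
      (∑' z : ℤ, (Qp (n - m) x z : ℂ) * Psi t₁ t₂ t₃ γ α β r (n - k) y₀ z)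
        = Psi t₁ t₂ t₃ γ α β r (m - k) y₀ x) :=
  statement11_general t₁ t₂ t₃ γ α β hα r hr hrα
end

section
/- Fix integers n ≥ 1 and 0 ≤ k ≤ n−1 and a strictly decreasing function X₀ : {1,…,n} → ℤ. Then there exists exactly one function h : {0,…,k} × ℤ → ℝ such that: (i) 2·h(l, z−1) − h(l, z) = h(l+1, z) for all 0 ≤ l < k and all z ∈ ℤ; (ii) h(k, z) = 2^{z − X₀(n−k)} for all z ∈ ℤ; and (iii) h(l, X₀(n−l)) = 0 for all 0 ≤ l < k. -/
/-!
Each layer `h l` is obtained from `h (l + 1)` by solving the first-order recurrence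
`2 u (z - 1) - u z = f z` on `ℤ` with one prescribed zero `u (X₀ (n - l)) = 0`. Writing
`u z = 2 ^ z v z` turns the recurrence into `v z - v (z - 1) = -f z / 2 ^ z`, whose solutions are
the discrete antiderivatives of `-f z / 2 ^ z`; exactly one of them vanishes at a given point,
because the difference of two solutions satisfies `d z = 2 d (z - 1)`. Descending from the
terminal layer `k` gives existence and uniqueness.
-/

open Finset

section SignedIntervalSum

variable {M : Type*} [AddCommGroup M]

noncomputable def signedIntervalSum (g : ℤ → M) (a z : ℤ) : M :=
  ∑ j ∈ Ioc a z, g j - ∑ j ∈ Ioc z a, g j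

@[simp]
lemma signedIntervalSum_self (g : ℤ → M) (a : ℤ) : signedIntervalSum g a a = 0 := by
  simp [signedIntervalSum]

lemma signedIntervalSum_sub_pred (g : ℤ → M) (a z : ℤ) :
    signedIntervalSum g a z - signedIntervalSum g a (z - 1) = g z := by
  rcases le_or_gt z a with hza | haz
  · rw [signedIntervalSum, signedIntervalSum, Ioc_eq_empty_of_le hza,
      Ioc_eq_empty_of_le (by omega : z - 1 ≤ a), ← insert_Ioc_left_eq_Ioc_sub_one hza,
      sum_insert left_notMem_Ioc]
    abel
  · rw [signedIntervalSum, signedIntervalSum, Ioc_eq_empty_of_le haz.le,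
      Ioc_eq_empty_of_le (by omega : a ≤ z - 1), ← insert_Ioc_sub_one_right_eq_Ioc haz,
      sum_insert (by simp)]
    abel

end SignedIntervalSum

lemma eq_zero_of_eq_mul_pred {M₀ : Type*} [MulZeroClass M₀] [NoZeroDivisors M₀]
    {c : M₀} (hc : c ≠ 0) {d : ℤ → M₀} (hd : ∀ z, d z = c * d (z - 1))
    {a : ℤ} (ha : d a = 0) (z : ℤ) : d z = 0 := by
  induction z using Int.inductionOn' (b := a) with
  | zero => exact ha
  | succ k _ hk => rw [hd, add_sub_cancel_right, hk, mul_zero]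
  | pred k _ hk => simpa [hc] using (hd k).symm.trans hk

section Recurrence

variable (f : ℤ → ℝ) (a : ℤ)

noncomputable def recurrenceSolution (z : ℤ) : ℝ :=
  2 ^ z * signedIntervalSum (fun j => -f j / 2 ^ j) a z

@[simp]
lemma recurrenceSolution_self : recurrenceSolution f a a = 0 := by
  simp [recurrenceSolution]

lemma two_mul_recurrenceSolution_pred_sub (z : ℤ) :
    2 * recurrenceSolution f a (z - 1) - recurrenceSolution f a z = f z := by
  have hstep := signedIntervalSum_sub_pred (fun j => -f j / (2 : ℝ) ^ j) a z
  have hpow : (2 : ℝ) * 2 ^ (z - 1) = 2 ^ z := by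
    rw [mul_comm, ← zpow_add_one₀ two_ne_zero, sub_add_cancel]
  simp only [recurrenceSolution]
  rw [← mul_assoc, hpow, ← mul_sub, ← neg_sub, hstep]
  field_simp

lemma eq_recurrenceSolution {u : ℤ → ℝ} (hu : ∀ z, 2 * u (z - 1) - u z = f z)
    (ha : u a = 0) : u = recurrenceSolution f a := by
  set d := u - recurrenceSolution f a
  have hd : ∀ z, d z = 2 * d (z - 1) := fun z => by
    simp only [d, Pi.sub_apply]
    linarith [hu z, two_mul_recurrenceSolution_pred_sub f a z]
  have hda : d a = 0 := by simp [d, ha]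
  exact sub_eq_zero.mp (funext (eq_zero_of_eq_mul_pred two_ne_zero hd hda))

end Recurrence

section Layers

variable (g : ℤ → ℝ) (p : ℕ → ℤ) (k : ℕ)

def IsLayeredSolution (h : ℕ → ℤ → ℝ) : Prop :=
  (∀ l, l < k → ∀ z, 2 * h l (z - 1) - h l z = h (l + 1) z) ∧
    (∀ z, h k z = g z) ∧ (∀ l, l < k → h l (p l) = 0)

noncomputable def layeredSolution (l : ℕ) : ℤ → ℝ :=
  if l < k then recurrenceSolution (layeredSolution (l + 1)) (p l) else g
termination_by k - l

lemma layeredSolution_of_lt {l : ℕ} (hl : l < k) :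
    layeredSolution g p k l = recurrenceSolution (layeredSolution g p k (l + 1)) (p l) := by
  rw [layeredSolution, if_pos hl]

lemma layeredSolution_self : layeredSolution g p k k = g := by
  rw [layeredSolution, if_neg (lt_irrefl k)]

lemma isLayeredSolution_layeredSolution : IsLayeredSolution g p k (layeredSolution g p k) := by
  refine ⟨fun l hl z => ?_, fun z => by rw [layeredSolution_self], fun l hl => ?_⟩
  · rw [layeredSolution_of_lt g p k hl]
    exact two_mul_recurrenceSolution_pred_sub _ _ z
  · rw [layeredSolution_of_lt g p k hl, recurrenceSolution_self]

lemma IsLayeredSolution.eq_layeredSolution {h : ℕ → ℤ → ℝ}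
    (hh : IsLayeredSolution g p k h) {l : ℕ} (hl : l ≤ k) : h l = layeredSolution g p k l := by
  obtain ⟨hrec, hterm, hzero⟩ := hh
  induction hl using Nat.decreasingInduction with
  | self => rw [layeredSolution_self]; exact funext hterm
  | of_succ l hl ih =>
    rw [layeredSolution_of_lt g p k hl, ← ih]
    exact eq_recurrenceSolution _ _ (hrec l hl) (hzero l hl)

end Layers

theorem statement13_general (n k : ℕ) (X₀ : ℕ → ℤ) :
    ∃ h : ℕ → ℤ → ℝ,
      ((∀ l, l < k → ∀ z : ℤ, 2 * h l (z - 1) - h l z = h (l + 1) z) ∧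
       (∀ z : ℤ, h k z = (2 : ℝ) ^ (z - X₀ (n - k))) ∧
       (∀ l, l < k → h l (X₀ (n - l)) = 0)) ∧
      ∀ h' : ℕ → ℤ → ℝ,
        ((∀ l, l < k → ∀ z : ℤ, 2 * h' l (z - 1) - h' l z = h' (l + 1) z) ∧
         (∀ z : ℤ, h' k z = (2 : ℝ) ^ (z - X₀ (n - k))) ∧
         (∀ l, l < k → h' l (X₀ (n - l)) = 0)) →
        ∀ l, l ≤ k → ∀ z : ℤ, h' l z = h l z := by
  set g : ℤ → ℝ := fun z => 2 ^ (z - X₀ (n - k))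
  set p : ℕ → ℤ := fun l => X₀ (n - l)
  exact ⟨layeredSolution g p k, isLayeredSolution_layeredSolution g p k,
    fun h' hh' l hl z => congrFun (IsLayeredSolution.eq_layeredSolution g p k hh' hl) z⟩

/-- Existence and uniqueness of the solution `h = h^n_k` of the initial–boundary
value problem for the backwards heat equation:
(i) `2·h(l, z−1) − h(l, z) = h(l+1, z)` for `0 ≤ l < k`;
(ii) `h(k, z) = 2^{z − X₀(n−k)}`;
(iii) `h(l, X₀(n−l)) = 0` for `0 ≤ l < k`;
with `X₀(1) > X₀(2) > … > X₀(n)` the initial particle positions. -/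
theorem statement13 (n k : ℕ) (hn : 1 ≤ n) (hk : k ≤ n - 1) (X₀ : ℕ → ℤ)
    (hX : ∀ i j : ℕ, 1 ≤ i → i < j → j ≤ n → X₀ j < X₀ i) :
    ∃ h : ℕ → ℤ → ℝ,
      ((∀ l, l < k → ∀ z : ℤ, 2 * h l (z - 1) - h l z = h (l + 1) z) ∧
       (∀ z : ℤ, h k z = (2 : ℝ) ^ (z - X₀ (n - k))) ∧
       (∀ l, l < k → h l (X₀ (n - l)) = 0)) ∧
      ∀ h' : ℕ → ℤ → ℝ,
        ((∀ l, l < k → ∀ z : ℤ, 2 * h' l (z - 1) - h' l z = h' (l + 1) z) ∧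
         (∀ z : ℤ, h' k z = (2 : ℝ) ^ (z - X₀ (n - k))) ∧
         (∀ l, l < k → h' l (X₀ (n - l)) = 0)) →
        ∀ l, l ≤ k → ∀ z : ℤ, h' l z = h l z :=
  statement13_general n k X₀
end

section
/- Fix integers n ≥ 1 and 0 ≤ k ≤ n−1, a strictly decreasing function X₀ : {1,…,n} → ℤ, and let h : {0,…,k} × ℤ → ℝ be the unique function satisfying: (i) 2·h(l, z−1) − h(l, z) = h(l+1, z) for all 0 ≤ l < k and z ∈ ℤ; (ii) h(k, z) = 2^{z − X₀(n−k)} for all z ∈ ℤ; (iii) h(l, X₀(n−l)) = 0 for all 0 ≤ l < k. Then there exists a polynomial P with real coefficients of degree at most k such that h(0, x) = 2^{x}·P(x) for all x ∈ ℤ. -/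
/-!
Write `h(l, z) = 2^z p_l(z)`. The heat equation becomes `p_l(z - 1) - p_l(z) = p_{l+1}(z)`, and
`p_k` is constant. Every polynomial of degree `≤ m` is such a backward difference of a polynomial
of degree `≤ m + 1`, since the differences `(X - 1)^(i+1) - X^(i+1)` have exact degree `i` and so
span. Two solutions on `ℤ` of the same difference equation differ by a `1`-periodic, hence
constant, function, so descending from `l = k` to `l = 0` each `p_l` is a polynomial of degree
`≤ k - l`.
-/

open Polynomial

namespace Polynomial

variable {K : Type*} [Field K] [CharZero K]

theorem degree_X_add_C_pow_succ_sub_X_pow {r : K} (hr : r ≠ 0) (i : ℕ) :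
    ((X + C r) ^ (i + 1) - X ^ (i + 1)).degree = (i : WithBot ℕ) := by
  have hmonic : ((X + C r) ^ (i + 1)).Monic := (monic_X_add_C r).pow _
  have hlt : ((X + C r) ^ (i + 1) - X ^ (i + 1)).degree < ↑(i + 1) := by
    have hdeg : ((X + C r) ^ (i + 1)).degree = ↑(i + 1) := by
      rw [degree_pow, degree_X_add_C]; simp
    simpa [hdeg] using degree_sub_lt_left (by rw [hdeg, degree_X_pow]) hmonic.ne_zero
      (by rw [hmonic.leadingCoeff, (monic_X_pow _).leadingCoeff])
  have hcoeff : ((X + C r) ^ (i + 1) - X ^ (i + 1)).coeff i = (i + 1) * r := by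
    rw [coeff_sub, coeff_X_add_C_pow, coeff_X_pow, if_neg (Nat.succ_ne_self i).symm,
      Nat.choose_succ_self_right, Nat.add_sub_cancel_left, pow_one]
    push_cast
    ring
  refine le_antisymm (Order.le_of_lt_succ ?_) (le_degree_of_ne_zero ?_)
  · exact_mod_cast hlt
  · rw [hcoeff]; exact mul_ne_zero (by exact_mod_cast Nat.succ_ne_zero i) hr

theorem exists_taylor_sub_self_eq_of_degree_le {r : K} (hr : r ≠ 0) {m : ℕ} {Q : K[X]}
    (hQ : Q.degree ≤ m) : ∃ P : K[X], P.degree ≤ ↑(m + 1) ∧ taylor r P - P = Q := by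
  let S : Sequence K := ⟨fun i ↦ (X + C r) ^ (i + 1) - X ^ (i + 1),
    degree_X_add_C_pow_succ_sub_X_pow hr⟩
  have hspan := S.span_degreeLE (m := m) fun i _ ↦
    (leadingCoeff_ne_zero.mpr (S.ne_zero i)).isUnit
  have hmem : Q ∈ (degreeLE K ↑(m + 1)).map (taylor r - LinearMap.id) := by
    rw [← mem_degreeLE, ← hspan] at hQ
    refine Submodule.span_le.mpr ?_ hQ
    rintro _ ⟨i, hi, rfl⟩
    refine ⟨X ^ (i + 1), mem_degreeLE.mpr ?_, by simp [S, taylor_apply]⟩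
    rw [degree_X_pow]
    exact_mod_cast Nat.succ_le_succ hi
  obtain ⟨P, hP, hPQ⟩ := hmem
  exact ⟨P, mem_degreeLE.mp hP, hPQ⟩

end Polynomial

theorem exists_zpow_mul_eval_of_mul_sub_eq {K : Type*} [Field K] [CharZero K] {a : K}
    (ha : a ≠ 0) {m : ℕ} {f : ℤ → K} {Q : K[X]} (hQ : Q.degree ≤ m)
    (hf : ∀ z : ℤ, a * f (z - 1) - f z = a ^ z * Q.eval (z : K)) :
    ∃ P : K[X], P.degree ≤ ↑(m + 1) ∧ ∀ z : ℤ, f z = a ^ z * P.eval (z : K) := by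
  obtain ⟨P, hPdeg, hPQ⟩ :=
    exists_taylor_sub_self_eq_of_degree_le (neg_ne_zero.mpr one_ne_zero) hQ
  have hdiff (x : K) : P.eval (x - 1) - P.eval x = Q.eval x := by
    simpa [taylor_eval, sub_eq_add_neg] using congr_arg (eval x) hPQ
  set g : ℤ → K := fun z ↦ f z / a ^ z - P.eval (z : K)
  have hg : Function.Periodic g 1 := fun z ↦ by
    have hfz := hf (z + 1)
    have hPz := hdiff (z + 1)
    push_cast at hfz
    rw [add_sub_cancel_right, zpow_add_one₀ ha] at hfz
    rw [add_sub_cancel_right] at hPz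
    simp only [g]
    push_cast
    rw [zpow_add_one₀ ha]
    field_simp
    linear_combination -hfz + a ^ z * a * hPz
  refine ⟨P + C (g 0), (degree_add_le _ _).trans (max_le hPdeg ?_), fun z ↦ ?_⟩
  · exact degree_C_le.trans (WithBot.coe_le_coe.mpr (Nat.zero_le _))
  · have hz : g z = g 0 := by simpa using hg.int_mul_eq z
    rw [eval_add, eval_C, ← hz]
    simp only [g]
    field_simp
    ring

theorem statement14_general (n k : ℕ) (X₀ : ℕ → ℤ)
    (h : ℕ → ℤ → ℝ)
    (hheat : ∀ l, l < k → ∀ z : ℤ, 2 * h l (z - 1) - h l z = h (l + 1) z)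
    (hinit : ∀ z : ℤ, h k z = (2 : ℝ) ^ (z - X₀ (n - k))) :
    ∃ P : Polynomial ℝ, P.degree ≤ k ∧
      ∀ x : ℤ, h 0 x = (2 : ℝ) ^ x * P.eval (x : ℝ) := by
  suffices ∀ j ≤ k, ∃ P : ℝ[X], P.degree ≤ j ∧
      ∀ x : ℤ, h (k - j) x = 2 ^ x * P.eval (x : ℝ) by
    simpa using this k le_rfl
  intro j
  induction j with
  | zero =>
    refine fun _ ↦ ⟨C ((2 : ℝ) ^ (-X₀ (n - k))), degree_C_le, fun x ↦ ?_⟩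
    rw [Nat.sub_zero, hinit, eval_C, ← zpow_add₀ two_ne_zero, sub_eq_add_neg]
  | succ j ih =>
    intro hj
    obtain ⟨Q, hQdeg, hQ⟩ := ih (by omega)
    refine exists_zpow_mul_eval_of_mul_sub_eq two_ne_zero hQdeg fun z ↦ ?_
    rw [hheat _ (by omega), ← hQ, show k - (j + 1) + 1 = k - j by omega]

/-- If `h = h^n_k` solves the initial–boundary value problem
(i) `2·h(l, z−1) − h(l, z) = h(l+1, z)` for `0 ≤ l < k`;
(ii) `h(k, z) = 2^{z − X₀(n−k)}`;
(iii) `h(l, X₀(n−l)) = 0` for `0 ≤ l < k`;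
then `2^{-x} h(0, x)` is (the restriction to `ℤ` of) a real polynomial of degree
at most `k`. -/
theorem statement14 (n k : ℕ) (hn : 1 ≤ n) (hk : k ≤ n - 1) (X₀ : ℕ → ℤ)
    (hX : ∀ i j : ℕ, 1 ≤ i → i < j → j ≤ n → X₀ j < X₀ i)
    (h : ℕ → ℤ → ℝ)
    (hheat : ∀ l, l < k → ∀ z : ℤ, 2 * h l (z - 1) - h l z = h (l + 1) z)
    (hinit : ∀ z : ℤ, h k z = (2 : ℝ) ^ (z - X₀ (n - k)))
    (hbdry : ∀ l, l < k → h l (X₀ (n - l)) = 0) :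
    ∃ P : Polynomial ℝ, P.degree ≤ k ∧
      ∀ x : ℤ, h 0 x = (2 : ℝ) ^ x * P.eval (x : ℝ) :=
  statement14_general n k X₀ h hheat hinit
end
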